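/- (Supersolution barrier, Lemma 3.1.) Let n ≥ 3 and β ∈ (0, 1/(10(n−2))). Define φ_β : B'₁ ⊂ ℝ^{n−1} → ℝ by φ_β(x') = β(|x''|² − 2(n−2) x_{n−1}²), where x' = (x'', x_{n−1}) ∈ ℝ^{n−2} × ℝ. Then there exists a constant c > 0 depending only on n such that H φ_β ≤ −c β at every point of B'₁, where H is the mean curvature operator H v := div( ∇v / √(1 + |∇v|²) ). Equivalently, (1 + |∇φ_β|²) Δφ_β − (∇φ_β)ᵀ D²φ_β ∇φ_β ≤ −c β (1 + |∇φ_β|²)^{3/2} in B'₁. -/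

import Mathlib

open Metric MeasureTheory Set
open scoped ENNReal NNReal Pointwise

noncomputable section

namespace ThinObs

abbrev V (n : ℕ) := EuclideanSpace ℝ (Fin n)

variable {n : ℕ}

/-- Divergence of a vector field: the trace of the total derivative. -/
def diverg (g : V n → V n) (x : V n) : ℝ :=
  LinearMap.trace ℝ (V n) (fderiv ℝ g x).toLinearMap

/-- Relative perimeter `P(E; Ω)`: supremum of `|∫_E div g|` over `C¹` vector
fields `g` with compact support contained in `Ω` and `‖g‖ ≤ 1` pointwise. -/
def perim (E Ω : Set (V n)) : ℝ≥0∞ :=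
  ⨆ g : {g : V n → V n // ContDiff ℝ 1 g ∧ HasCompactSupport g ∧
          tsupport g ⊆ Ω ∧ ∀ x, ‖g x‖ ≤ 1},
    ENNReal.ofReal |∫ x in E, diverg g.1 x|

/-- The coordinate `x_{m-1}` (Lean index `m-2`). -/
def penC {m : ℕ} (x : EuclideanSpace ℝ (Fin m)) : ℝ :=
  if h : 2 ≤ m then x ⟨m - 2, by omega⟩ else 0

/-- The last coordinate `x_m` (Lean index `m-1`). -/
def lastC {m : ℕ} (x : EuclideanSpace ℝ (Fin m)) : ℝ :=
  if h : 1 ≤ m then x ⟨m - 1, by omega⟩ else 0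

/-- The first `m-1` coordinates `x'` of a point `x`. -/
def frontC {m : ℕ} (x : EuclideanSpace ℝ (Fin m)) : EuclideanSpace ℝ (Fin (m - 1)) :=
  (EuclideanSpace.equiv (Fin (m - 1)) ℝ).symm fun i => x (Fin.castLE (Nat.sub_le m 1) i)

/-- `e_ω = sin ω · e_{n-1} + cos ω · e_n`. -/
def ee (n : ℕ) (ω : ℝ) : V n :=
  if h : 2 ≤ n then
    Real.sin ω • EuclideanSpace.single (⟨n - 2, by omega⟩ : Fin n) 1 +
      Real.cos ω • EuclideanSpace.single (⟨n - 1, by omega⟩ : Fin n) 1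
  else 0

/-- The wedge `Λ_{γ,θ}`. -/
def wedge (n : ℕ) (γ θ : ℝ) : Set (V n) :=
  {x | (inner ℝ (ee n (γ + θ)) x : ℝ) ≤ 0 ∧ (inner ℝ (ee n (γ - θ)) x : ℝ) ≤ 0}

/-- `Λ^δ = Λ_{0, π/2 - δ}`. -/
def wedgeD (n : ℕ) (δ : ℝ) : Set (V n) := wedge n 0 (Real.pi / 2 - δ)

/-- Admissible pair of angles. -/
def Admissible (γ θ : ℝ) : Prop :=
  -(Real.pi / 2) ≤ γ ∧ γ ≤ Real.pi / 2 ∧ 0 ≤ θ ∧ θ ≤ Real.pi / 2 - |γ|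

/-- A `C^{1,1}` diffeomorphism of `ℝⁿ`. -/
def IsC11Diffeo (Φ : V n → V n) : Prop :=
  Function.Bijective Φ ∧ ContDiff ℝ 1 Φ ∧
    (∃ K : ℝ≥0, LipschitzWith K fun x => fderiv ℝ Φ x) ∧
    ContDiff ℝ 1 (Function.invFun Φ)

/-- `E` is normalized: topological and measure-theoretic boundaries agree. -/
def Normalized (E : Set (V n)) : Prop :=
  ∀ x : V n, x ∈ frontier E ↔
    ∀ r : ℝ, 0 < r →
      0 < volume (E ∩ ball x r) ∧ volume (E ∩ ball x r) < volume (ball x r)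

/-- `E` is a minimizer of the `δ`-thin obstacle problem in `B₁` with diffeomorphism `Φ`. -/
def MinTOP (n : ℕ) (δ : ℝ) (Φ : V n → V n) (E : Set (V n)) : Prop :=
  perim E (ball 0 1) < ⊤ ∧ Φ '' wedgeD n δ ∩ ball 0 1 ⊆ E ∧
    ∀ F : Set (V n), MeasurableSet F → F \ ball 0 1 = E \ ball 0 1 →
      Φ '' wedgeD n δ ∩ ball 0 1 ⊆ F → perim E (ball 0 1) ≤ perim F (ball 0 1)

/-- `∂𝒪 = Φ({x_{n-1} = x_n = 0})`. -/
def obstB (n : ℕ) (Φ : V n → V n) : Set (V n) :=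
  Φ '' {x | penC x = 0 ∧ lastC x = 0}

/-- `E` is `ε`-close to `Λ_{γ,θ}` in `B`. -/
def CloseTo (n : ℕ) (E : Set (V n)) (γ θ ε : ℝ) (B : Set (V n)) : Prop :=
  {x : V n | ε ≤ infDist x (wedge n γ θ)ᶜ} ∩ B ⊆ E ∩ B ∧
    E ∩ B ⊆ {x : V n | infDist x (wedge n γ θ) ≤ ε} ∩ B

/-- `E` is a supersolution of the minimal perimeter problem in `B`. -/
def Supersol (E B : Set (V n)) : Prop :=
  ∀ F : Set (V n), MeasurableSet F → E ⊆ F → IsCompact (closure (F \ E)) →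
    closure (F \ E) ⊆ B → perim E B ≤ perim F B

/-- `E` is a local minimizer of the perimeter in `B`. -/
def LocalPerimMin (E B : Set (V n)) : Prop :=
  ∀ F : Set (V n), MeasurableSet F → F \ B = E \ B → perim E B ≤ perim F B

/-- `f` is `C¹` on `S` (in the within sense, i.e. up to the boundary) with
`|f| ≤ C`, `‖∇f‖ ≤ C` and `a`-Hölder seminorm of `∇f` bounded by `C`. -/
def HolderC1On {m : ℕ} (f : EuclideanSpace ℝ (Fin m) → ℝ)
    (S : Set (EuclideanSpace ℝ (Fin m))) (a C : ℝ) : Prop :=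
  ∃ f' : EuclideanSpace ℝ (Fin m) → EuclideanSpace ℝ (Fin m) →L[ℝ] ℝ,
    (∀ x ∈ S, HasFDerivWithinAt f (f' x) S x) ∧
    (∀ x ∈ S, |f x| ≤ C ∧ ‖f' x‖ ≤ C) ∧
    ∀ x ∈ S, ∀ y ∈ S, ‖f' x - f' y‖ ≤ C * ‖x - y‖ ^ a

/-- The operator `M(D²v, ∇v) = (1+|∇v|²)Δv − (∇v)ᵀ D²v ∇v`. -/
def Mop {m : ℕ} (φ : EuclideanSpace ℝ (Fin m) → ℝ) (x : EuclideanSpace ℝ (Fin m)) : ℝ :=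
  (1 + ‖gradient φ x‖ ^ 2) *
      (∑ i : Fin m, fderiv ℝ (fderiv ℝ φ) x (EuclideanSpace.single i 1) (EuclideanSpace.single i 1)) -
    fderiv ℝ (fderiv ℝ φ) x (gradient φ x) (gradient φ x)

/-- `S⁺_φ = {(x', xₙ) : x' ∈ B'₁, xₙ < φ(x')}`. -/
def Splus (n : ℕ) (φ : EuclideanSpace ℝ (Fin (n - 1)) → ℝ) : Set (V n) :=
  {x | frontC x ∈ ball 0 1 ∧ lastC x < φ (frontC x)}

/-- `S⁻_φ = {(x', xₙ) : x' ∈ B'₁, −xₙ < φ(x')}`. -/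
def Sminus (n : ℕ) (φ : EuclideanSpace ℝ (Fin (n - 1)) → ℝ) : Set (V n) :=
  {x | frontC x ∈ ball 0 1 ∧ -lastC x < φ (frontC x)}

/-- Cylinder `Q_r = B'_r × (−1, 1)`. -/
def cyl (n : ℕ) (r : ℝ) : Set (V n) :=
  {x | frontC x ∈ ball 0 r ∧ |lastC x| < 1}

/-- Rotation by angle `γ` in the `(x_{n-1}, x_n)`-plane taking `e_γ` to `e_n`. -/
def rotLast (n : ℕ) (γ : ℝ) (x : V n) : V n :=
  (EuclideanSpace.equiv (Fin n) ℝ).symm fun i =>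
    if (i : ℕ) = n - 2 ∧ 2 ≤ n then Real.cos γ * penC x - Real.sin γ * lastC x
    else if (i : ℕ) = n - 1 ∧ 2 ≤ n then Real.sin γ * penC x + Real.cos γ * lastC x
    else x i

/-- `Γ` is the graph, in direction `e`, of a function on a subset `D` of the hyperplane
orthogonal to `e`, of class `C¹` up to the boundary of its domain, with value, gradient
and `β`-Hölder seminorm of the gradient bounded by `C`. -/
def GraphInDir (n : ℕ) (Γ : Set (V n)) (e : V n) (β C : ℝ) : Prop :=
  ∃ (D : Set (V n)) (f : V n → ℝ) (f' : V n → V n →L[ℝ] ℝ),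
    D ⊆ {y : V n | (inner ℝ y e : ℝ) = 0} ∧
    Γ = (fun y => y + f y • e) '' D ∧
    (∀ x ∈ closure D, HasFDerivWithinAt f (f' x) (closure D) x) ∧
    (∀ x ∈ closure D, |f x| ≤ C ∧ ‖f' x‖ ≤ C) ∧
    ∀ x ∈ closure D, ∀ y ∈ closure D, ‖f' x - f' y‖ ≤ C * ‖x - y‖ ^ β

/-- `Γ` is, for the exponent `β`, a `C^{1,β}`-graph (in suitable orthogonal coordinates)
of a function of `n-1` variables, regular up to the boundary of its domain. -/
def IsC1HolderGraph (n : ℕ) (Γ : Set (V n)) (β : ℝ) : Prop :=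
  ∃ (R : V n ≃ₗᵢ[ℝ] V n) (D : Set (EuclideanSpace ℝ (Fin (n - 1))))
    (f : EuclideanSpace ℝ (Fin (n - 1)) → ℝ) (C : ℝ),
    R '' Γ = {y : V n | frontC y ∈ D ∧ lastC y = f (frontC y)} ∧
    HolderC1On f (closure D) β C

/-- Vertical rescaling `(x', xₙ) ↦ (x', xₙ / (2ε))`. -/
def vertScale (n : ℕ) (ε : ℝ) (x : V n) : V n :=
  (EuclideanSpace.equiv (Fin n) ℝ).symm fun i =>
    if (i : ℕ) = n - 1 ∧ 1 ≤ n then x i / (2 * ε) else x i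

/-!
`φ_β` is the diagonal quadratic form `∑ cᵢ yᵢ²` with `n - 2` coefficients `β` and one
coefficient `-2(n-2)β`. Its Hessian is the constant matrix `diag(2cᵢ)`, of trace
`-2(n-2)β`, so `(1 + |∇φ_β|²) Δφ_β = -2(n-2)β (1 + |∇φ_β|²)`. Since every `cᵢ ≥ -2(n-2)β`,
the remaining term `-∇φ_βᵀ D²φ_β ∇φ_β` is at most `4(n-2)β |∇φ_β|²`, and on the unit ball
`|∇φ_β|² ≤ 16(n-2)²β² < 4/25`. Altogether the operator is at most `-2(n-2)β (1 - |∇φ_β|²)`,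
which beats `-β (1 + |∇φ_β|²)^{3/2}`: the constant `c = 1` works for every `n`.
-/

section DiagQuad

variable {ι : Type*} [Fintype ι] (c : ι → ℝ)

def diagQuad (y : EuclideanSpace ℝ ι) : ℝ := ∑ i, c i * y i ^ 2

def diagQuadHessian : EuclideanSpace ℝ ι →L[ℝ] EuclideanSpace ℝ ι →L[ℝ] ℝ :=
  ∑ i, (2 * c i) • (EuclideanSpace.proj i).smulRight (EuclideanSpace.proj i)

@[simp]
lemma diagQuadHessian_apply (u v : EuclideanSpace ℝ ι) :
    diagQuadHessian c u v = ∑ i, 2 * c i * u i * v i := by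
  simp [diagQuadHessian, mul_assoc]

lemma hasFDerivAt_diagQuad (x : EuclideanSpace ℝ ι) :
    HasFDerivAt (diagQuad c) (diagQuadHessian c x) x := by
  refine (HasFDerivAt.fun_sum (u := Finset.univ) fun i _ =>
    (((EuclideanSpace.proj (𝕜 := ℝ) i).hasFDerivAt (x := x)).pow 2).const_mul (c i)).congr_fderiv ?_
  ext v
  simp [mul_assoc, mul_left_comm]

lemma fderiv_fderiv_diagQuad (x : EuclideanSpace ℝ ι) :
    fderiv ℝ (fderiv ℝ (diagQuad c)) x = diagQuadHessian c := by
  rw [show fderiv ℝ (diagQuad c) = diagQuadHessian c from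
    funext fun y => (hasFDerivAt_diagQuad c y).fderiv, ContinuousLinearMap.fderiv]

lemma gradient_diagQuad (x : EuclideanSpace ℝ ι) :
    gradient (diagQuad c) x = WithLp.toLp 2 fun i => 2 * c i * x i := by
  refine HasGradientAt.gradient ?_
  rw [hasGradientAt_iff_hasFDerivAt]
  refine (hasFDerivAt_diagQuad c x).congr_fderiv ?_
  ext v
  simp [PiLp.inner_apply, mul_comm]

lemma norm_gradient_diagQuad_sq (x : EuclideanSpace ℝ ι) :
    ‖gradient (diagQuad c) x‖ ^ 2 = ∑ i, (2 * c i * x i) ^ 2 := by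
  simp [gradient_diagQuad, EuclideanSpace.real_norm_sq_eq]

lemma norm_gradient_diagQuad_sq_le {L : ℝ} (hc : ∀ i, |c i| ≤ L) (x : EuclideanSpace ℝ ι) :
    ‖gradient (diagQuad c) x‖ ^ 2 ≤ (2 * L) ^ 2 * ‖x‖ ^ 2 := by
  rw [norm_gradient_diagQuad_sq, EuclideanSpace.real_norm_sq_eq, Finset.mul_sum]
  refine Finset.sum_le_sum fun i _ => ?_
  have hci : c i ^ 2 ≤ L ^ 2 := sq_le_sq' (abs_le.mp (hc i)).1 (abs_le.mp (hc i)).2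
  calc (2 * c i * x i) ^ 2 = 4 * c i ^ 2 * x i ^ 2 := by ring
    _ ≤ 4 * L ^ 2 * x i ^ 2 := by gcongr
    _ = (2 * L) ^ 2 * x i ^ 2 := by ring

end DiagQuad

section MeanCurvature

variable {m : ℕ} (c : Fin m → ℝ) (x : EuclideanSpace ℝ (Fin m))

lemma mop_diagQuad :
    Mop (diagQuad c) x = (1 + ‖gradient (diagQuad c) x‖ ^ 2) * (2 * ∑ i, c i) -
      ∑ i, 2 * c i * (2 * c i * x i) ^ 2 := by
  have htrace : ∑ i, diagQuadHessian c (EuclideanSpace.single i 1) (EuclideanSpace.single i 1) =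
      2 * ∑ i, c i := by
    simp [Finset.mul_sum]
  have hquad : diagQuadHessian c (gradient (diagQuad c) x) (gradient (diagQuad c) x) =
      ∑ i, 2 * c i * (2 * c i * x i) ^ 2 := by
    simp only [diagQuadHessian_apply, gradient_diagQuad]
    exact Finset.sum_congr rfl fun i _ => by ring
  rw [Mop, fderiv_fderiv_diagQuad, htrace, hquad]

lemma mop_diagQuad_le {L : ℝ} (hc : ∀ i, -L ≤ c i) :
    Mop (diagQuad c) x ≤
      2 * ((1 + ‖gradient (diagQuad c) x‖ ^ 2) * ∑ i, c i + L * ‖gradient (diagQuad c) x‖ ^ 2) := by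
  have hcorr : -∑ i, 2 * c i * (2 * c i * x i) ^ 2 ≤ 2 * L * ∑ i, (2 * c i * x i) ^ 2 := by
    rw [← Finset.sum_neg_distrib, Finset.mul_sum]
    exact Finset.sum_le_sum fun i _ => by nlinarith [hc i, sq_nonneg (2 * c i * x i)]
  rw [mop_diagQuad, norm_gradient_diagQuad_sq]
  linarith

end MeanCurvature

section Barrier

def barrierCoeff (n : ℕ) (β : ℝ) (i : Fin (n - 1)) : ℝ :=
  if (i : ℕ) < n - 2 then β else -(2 * ((n : ℝ) - 2) * β)

lemma val_lt_sub_two_iff_ne {n : ℕ} (hn : 2 ≤ n) (i : Fin (n - 1)) :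
    (i : ℕ) < n - 2 ↔ i ≠ ⟨n - 2, by omega⟩ := by
  have := i.isLt
  simp only [Ne, Fin.ext_iff]
  omega

variable {n : ℕ} (β : ℝ)

lemma barrier_eq_diagQuad (hn : 2 ≤ n) :
    (fun y : EuclideanSpace ℝ (Fin (n - 1)) =>
        β * ((∑ i : Fin (n - 1), if (i : ℕ) < n - 2 then y i ^ 2 else 0) -
          2 * ((n : ℝ) - 2) * lastC y ^ 2)) =
      diagQuad (barrierCoeff n β) := by
  funext y
  set j : Fin (n - 1) := ⟨n - 2, by omega⟩
  have hlast : lastC y = y j := by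
    rw [lastC, dif_pos (by omega)]
    exact congrArg y.ofLp (Fin.ext (by simp [j]; omega))
  have hsplit : ∀ i, barrierCoeff n β i * y i ^ 2 =
      β * (if (i : ℕ) < n - 2 then y i ^ 2 else 0) -
        2 * ((n : ℝ) - 2) * β * (if i = j then y i ^ 2 else 0) := by
    intro i
    simp only [barrierCoeff, val_lt_sub_two_iff_ne hn]
    by_cases hij : i = j <;> simp [hij, j]
  simp only [diagQuad, hsplit, Finset.sum_sub_distrib, ← Finset.mul_sum, Finset.sum_ite_eq',
    Finset.mem_univ, if_true, hlast]
  ring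

lemma sum_barrierCoeff (hn : 2 ≤ n) : ∑ i, barrierCoeff n β i = -(((n : ℝ) - 2) * β) := by
  set j : Fin (n - 1) := ⟨n - 2, by omega⟩
  have hsplit : ∀ i, barrierCoeff n β i = β - if i = j then (2 * ((n : ℝ) - 2) + 1) * β else 0 := by
    intro i
    simp only [barrierCoeff, val_lt_sub_two_iff_ne hn]
    by_cases hij : i = j
    · simp [hij, j]
      ring
    · simp [hij, j]
  simp only [hsplit, Finset.sum_sub_distrib, Finset.sum_const, Finset.card_univ, Fintype.card_fin,
    nsmul_eq_mul, Finset.sum_ite_eq', Finset.mem_univ, if_true]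
  rw [Nat.cast_sub (by omega)]
  push_cast
  ring

lemma abs_barrierCoeff_le (hn : 3 ≤ n) (hβ : 0 ≤ β) (i : Fin (n - 1)) :
    |barrierCoeff n β i| ≤ 2 * ((n : ℝ) - 2) * β := by
  have hn' : (3 : ℝ) ≤ n := by exact_mod_cast hn
  unfold barrierCoeff
  split_ifs
  · rw [abs_of_nonneg hβ]
    nlinarith
  · rw [abs_neg, abs_of_nonneg (by nlinarith)]

end Barrier

lemma mul_one_add_rpow_three_halves_le {β a G : ℝ} (hβ : 0 ≤ β) (hβa : β ≤ a) (hG0 : 0 ≤ G)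
    (hG : G ≤ 4 / 25) : β * (1 + G) ^ ((3 : ℝ) / 2) ≤ 2 * a * (1 - G) := by
  have hpow : (1 + G) ^ ((3 : ℝ) / 2) ≤ (1 + G) ^ 2 := by
    rw [← Real.rpow_two]
    exact Real.rpow_le_rpow_of_exponent_le (by linarith) (by norm_num)
  calc β * (1 + G) ^ ((3 : ℝ) / 2) ≤ β * (1 + G) ^ 2 := by gcongr
    _ ≤ β * (2 * (1 - G)) := by gcongr; nlinarith
    _ ≤ 2 * a * (1 - G) := by nlinarith

/-- **The supersolution barrier** (Lemma 3.1): `φ_β(x', x_{n-1}) = β(|x''|² − 2(n−2)x_{n−1}²)`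
satisfies `Hφ_β ≤ −cβ` in `B'₁`, i.e.
`(1+|∇φ_β|²)Δφ_β − ∇φ_βᵀ D²φ_β ∇φ_β ≤ −cβ (1+|∇φ_β|²)^{3/2}`. -/
theorem supersolution_barrier (n : ℕ) (hn : 3 ≤ n) :
    ∃ c : ℝ, 0 < c ∧
      ∀ β : ℝ, β ∈ Set.Ioo 0 (1 / (10 * ((n : ℝ) - 2))) →
      ∀ x' : EuclideanSpace ℝ (Fin (n - 1)), x' ∈ ball 0 1 →
        Mop (fun y : EuclideanSpace ℝ (Fin (n - 1)) =>
            β * ((∑ i : Fin (n - 1), if (i : ℕ) < n - 2 then y i ^ 2 else 0) -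
              2 * ((n : ℝ) - 2) * lastC y ^ 2)) x' ≤
          -(c * β) * (1 + ‖gradient (fun y : EuclideanSpace ℝ (Fin (n - 1)) =>
            β * ((∑ i : Fin (n - 1), if (i : ℕ) < n - 2 then y i ^ 2 else 0) -
              2 * ((n : ℝ) - 2) * lastC y ^ 2)) x'‖ ^ 2) ^ ((3 : ℝ) / 2) := by
  refine ⟨1, one_pos, fun β ⟨hβ, hβn⟩ x hx => ?_⟩
  rw [barrier_eq_diagQuad β (by omega)]
  have hK : (1 : ℝ) ≤ (n : ℝ) - 2 := by
    have : (3 : ℝ) ≤ n := by exact_mod_cast hn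
    linarith
  have hKβ : ((n : ℝ) - 2) * β < 1 / 10 := by
    rw [lt_div_iff₀ (by positivity)] at hβn
    linarith
  have hc := abs_barrierCoeff_le β hn hβ.le
  have hM := mop_diagQuad_le _ x fun i => (abs_le.mp (hc i)).1
  rw [sum_barrierCoeff β (by omega)] at hM
  set G := ‖gradient (diagQuad (barrierCoeff n β)) x‖ ^ 2
  have hG0 : 0 ≤ G := by positivity
  have hG : G ≤ 4 / 25 := by
    have hx1 : ‖x‖ ^ 2 ≤ 1 := pow_le_one₀ (norm_nonneg x) (mem_ball_zero_iff.mp hx).le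
    nlinarith [norm_gradient_diagQuad_sq_le _ hc x, mul_pos (by linarith : (0 : ℝ) < (n : ℝ) - 2) hβ]
  have hβK : β ≤ ((n : ℝ) - 2) * β := le_mul_of_one_le_left hβ.le hK
  linarith [mul_one_add_rpow_three_halves_le hβ.le hβK hG0 hG]

end ThinObs
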